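/- arXiv:2107.10884 — 2 statements merged into one kernel-verified Lean document; each statement's English description precedes it below -/
import Mathlib

section
/- If M belongs to M_up(k), i.e. M = [[M_A, M_B],[0, M_D]] with M_A symmetric k×k and M_D diagonal, then h(M) = I + M + (1/2)M² belongs to B_up(k) and det(h(M)) > 0. -/
open Matrix

/-- `h(M) = I + M + (1/2) M²`. -/
noncomputable def hmat {n : Type*} [Fintype n] [DecidableEq n]
    (M : Matrix n n ℝ) : Matrix n n ℝ :=
  1 + M + (1/2 : ℝ) • (M * M)

/-- The local parameter space `M_up(k)`: block matrices `[[M_A, M_B],[0, M_D]]`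
with `M_A` symmetric and `M_D` diagonal. -/
def Mup (k d : ℕ) : Set (Matrix (Fin k ⊕ Fin d) (Fin k ⊕ Fin d) ℝ) :=
  {X | ∃ (MA : Matrix (Fin k) (Fin k) ℝ) (MB : Matrix (Fin k) (Fin d) ℝ)
        (MD : Matrix (Fin d) (Fin d) ℝ),
      MA.IsSymm ∧ MD.IsDiag ∧ X = Matrix.fromBlocks MA MB 0 MD}

/-- The group `B_up(k)`: block matrices `[[B_A, B_B],[0, B_D]]`
with `B_A` invertible and `B_D` invertible diagonal. -/
def Bup (k d : ℕ) : Set (Matrix (Fin k ⊕ Fin d) (Fin k ⊕ Fin d) ℝ) :=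
  {X | ∃ (A : Matrix (Fin k) (Fin k) ℝ) (B : Matrix (Fin k) (Fin d) ℝ)
        (D : Matrix (Fin d) (Fin d) ℝ),
      IsUnit A ∧ D.IsDiag ∧ IsUnit D ∧ X = Matrix.fromBlocks A B 0 D}

/-!
Completing the square, `h(S) = ½((S + 1)² + 1)`, so `h(S)` is positive definite whenever `S` is
symmetric. Since `h` of an upper block-triangular matrix is upper block-triangular with diagonal
blocks `h(M_A)` and `h(M_D)`, both positive definite and the second diagonal, `h(M)` lies in
`B_up(k)` and its determinant `det h(M_A) * det h(M_D)` is positive.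
-/

lemma hmat_eq_half_smul_sq_add_one {n : Type*} [Fintype n] [DecidableEq n] (S : Matrix n n ℝ) :
    hmat S = (1/2 : ℝ) • ((S + 1) * (S + 1) + 1) := by
  have hsq : (S + 1) * (S + 1) = S * S + S + S + 1 := by noncomm_ring
  rw [hmat, hsq]
  module

lemma posDef_hmat {n : Type*} [Fintype n] [DecidableEq n] {S : Matrix n n ℝ} (hS : S.IsSymm) :
    (hmat S).PosDef := by
  have hS1 : (S + 1)ᴴ = S + 1 := (isHermitian_iff_isSymm.mpr hS).add isHermitian_one
  rw [hmat_eq_half_smul_sq_add_one]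
  refine PosDef.smul ?_ (by norm_num)
  have hsq := posSemidef_conjTranspose_mul_self (S + 1)
  rw [hS1] at hsq
  exact PosDef.posSemidef_add hsq PosDef.one

lemma Matrix.IsDiag.hmat {n : Type*} [Fintype n] [DecidableEq n] {D : Matrix n n ℝ}
    (hD : D.IsDiag) : (hmat D).IsDiag := by
  have hsq : D * D = diagonal (fun i => D i i * D i i) := by
    rw [← hD.diagonal_diag, diagonal_mul_diagonal]
    simp
  rw [_root_.hmat, hsq]
  exact (isDiag_one.add hD).add ((isDiag_diagonal _).smul _)

lemma hmat_fromBlocks_zero₂₁ {m n : Type*} [Fintype m] [Fintype n] [DecidableEq m]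
    [DecidableEq n] (A : Matrix m m ℝ) (B : Matrix m n ℝ) (D : Matrix n n ℝ) :
    hmat (fromBlocks A B 0 D) =
      fromBlocks (hmat A) (B + (1/2 : ℝ) • (A * B + B * D)) 0 (hmat D) := by
  simp [hmat, fromBlocks_multiply, fromBlocks_smul, ← fromBlocks_one, fromBlocks_add, smul_add]

/-- If `M ∈ M_up(k)`, then `h(M) = I + M + (1/2)M² ∈ B_up(k)` and `det (h M) > 0`. -/
theorem hmat_mem_Bup {k d : ℕ} (M : Matrix (Fin k ⊕ Fin d) (Fin k ⊕ Fin d) ℝ)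
    (hM : M ∈ Mup k d) :
    hmat M ∈ Bup k d ∧ 0 < (hmat M).det := by
  obtain ⟨MA, MB, MD, hA, hD, rfl⟩ := hM
  have hApos := posDef_hmat hA
  have hDpos := posDef_hmat hD.isSymm
  rw [hmat_fromBlocks_zero₂₁]
  refine ⟨⟨_, _, _, hApos.isUnit, hD.hmat, hDpos.isUnit, rfl⟩, ?_⟩
  rw [det_fromBlocks_zero₂₁]
  exact mul_pos hApos.det_pos hDpos.det_pos
end

section
/- If B = [[B_A, B_B],[0, B_D]] ∈ B_up(k) with B_D diagonal invertible and B_A invertible, then the inverse of B Bᵀ admits the decomposition (B Bᵀ)⁻¹ = U_k U_kᵀ + diag-block matrix [[0,0],[0, B_D⁻²]], where U_k is the p×k matrix [−B_A⁻ᵀ; B_D⁻¹ B_Bᵀ B_A⁻ᵀ] (stacked vertically). In particular (BBᵀ)⁻¹ is a rank-k perturbation of a block-diagonal matrix. -/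
open Matrix

/-!
Since `M = [[A, B], [0, D]]` is block upper triangular, `M⁻¹` has block rows
`R₁ = [A⁻¹, -A⁻¹ B D⁻¹]` and `R₂ = [0, D⁻¹]`, and `(M Mᵀ)⁻¹ = (M⁻¹)ᵀ M⁻¹ = R₁ᵀ R₁ + R₂ᵀ R₂`.
For symmetric `D` one has `R₁ᵀ = -U_k`, and `R₂ᵀ R₂` is the block `D⁻²`. The rank of `U_k` is `k`
because `R₁` has the right inverse `[A; 0]`.
-/

namespace Matrix

variable {R : Type*} {l m n : Type*}

theorem rank_eq_card_width_of_mul_eq_one [CommSemiring R] [StrongRankCondition R]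
    [Fintype m] [Fintype n] [DecidableEq n]
    {X : Matrix n m R} {Y : Matrix m n R} (h : X * Y = 1) : Y.rank = Fintype.card n :=
  le_antisymm (rank_le_card_width Y) (by simpa [h] using rank_mul_le_right X Y)

theorem transpose_fromRows_mul_self [CommSemiring R] [Fintype l] [Fintype m]
    (X : Matrix l n R) (Y : Matrix m n R) :
    (fromRows X Y)ᵀ * fromRows X Y = Xᵀ * X + Yᵀ * Y := by
  rw [transpose_fromRows, fromCols_mul_fromRows]

variable [CommRing R] [Fintype m] [Fintype n] [DecidableEq m]

theorem fromCols_inv_mul_fromRows_eq_one {A : Matrix m m R} (C : Matrix m n R) (hA : IsUnit A) :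
    fromCols A⁻¹ C * fromRows A (0 : Matrix n m R) = 1 := by
  rw [fromCols_mul_fromRows, nonsing_inv_mul A ((isUnit_iff_isUnit_det A).mp hA),
    Matrix.mul_zero, add_zero]

variable [DecidableEq n]

theorem inv_mul_transpose_eq_transpose_inv_mul_inv (M : Matrix n n R) :
    (M * Mᵀ)⁻¹ = (M⁻¹)ᵀ * M⁻¹ := by
  rw [mul_inv_rev, transpose_nonsing_inv]

theorem inv_fromBlocks_zero₂₁_eq_fromRows {A : Matrix m m R} (B : Matrix m n R)
    {D : Matrix n n R} (hA : IsUnit A) (hD : IsUnit D) :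
    (fromBlocks A B 0 D)⁻¹ = fromRows (fromCols A⁻¹ (-(A⁻¹ * B * D⁻¹))) (fromCols 0 D⁻¹) := by
  rw [inv_fromBlocks_zero₂₁_of_isUnit_iff A B D (iff_of_true hA hD),
    fromRows_fromCols_eq_fromBlocks]

theorem inv_mul_transpose_fromBlocks_zero₂₁ {A : Matrix m m R} (B : Matrix m n R)
    {D : Matrix n n R} (hA : IsUnit A) (hD : IsUnit D) :
    (fromBlocks A B 0 D * (fromBlocks A B 0 D)ᵀ)⁻¹ =
      (fromCols A⁻¹ (-(A⁻¹ * B * D⁻¹)))ᵀ * fromCols A⁻¹ (-(A⁻¹ * B * D⁻¹)) +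
        fromBlocks 0 0 0 ((D⁻¹)ᵀ * D⁻¹) := by
  rw [inv_mul_transpose_eq_transpose_inv_mul_inv, inv_fromBlocks_zero₂₁_eq_fromRows B hA hD,
    transpose_fromRows_mul_self]
  congr 1
  rw [transpose_fromCols, fromRows_mul_fromCols]
  simp only [transpose_zero, Matrix.zero_mul, Matrix.mul_zero]

end Matrix

/-- For `B = [[B_A, B_B],[0, B_D]] ∈ B_up(k)` (`B_A` invertible, `B_D` invertible diagonal),
`(B Bᵀ)⁻¹ = U_k U_kᵀ + [[0,0],[0,B_D⁻²]]` with `U_k = [−B_A⁻ᵀ; B_D⁻¹ B_Bᵀ B_A⁻ᵀ]`,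
and `U_k` has rank `k`; in particular `(BBᵀ)⁻¹` is a rank-`k` perturbation of a
block-diagonal matrix. -/
theorem inv_BBt_rank_k_decomposition {k d : ℕ}
    (A : Matrix (Fin k) (Fin k) ℝ) (B : Matrix (Fin k) (Fin d) ℝ)
    (D : Matrix (Fin d) (Fin d) ℝ)
    (hA : IsUnit A) (hDdiag : D.IsDiag) (hD : IsUnit D) :
    ((Matrix.fromBlocks A B 0 D) * (Matrix.fromBlocks A B 0 D)ᵀ)⁻¹
        = (Matrix.fromRows (-(A⁻¹)ᵀ) (D⁻¹ * Bᵀ * (A⁻¹)ᵀ)) *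
            (Matrix.fromRows (-(A⁻¹)ᵀ) (D⁻¹ * Bᵀ * (A⁻¹)ᵀ))ᵀ
          + Matrix.fromBlocks 0 0 0 (D⁻¹ * D⁻¹) ∧
      (Matrix.fromRows (-(A⁻¹)ᵀ) (D⁻¹ * Bᵀ * (A⁻¹)ᵀ)).rank = k := by
  have hDinv_symm : (D⁻¹)ᵀ = D⁻¹ := by rw [transpose_nonsing_inv, hDdiag.isSymm]
  have hU : fromRows (-(A⁻¹)ᵀ) (D⁻¹ * Bᵀ * (A⁻¹)ᵀ) = -(fromCols A⁻¹ (-(A⁻¹ * B * D⁻¹)))ᵀ := by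
    simp [transpose_fromCols, fromRows_neg, transpose_mul, hDinv_symm, Matrix.mul_assoc]
  rw [hU]
  constructor
  · rw [inv_mul_transpose_fromBlocks_zero₂₁ B hA hD, hDinv_symm, transpose_neg, transpose_transpose,
      Matrix.neg_mul, Matrix.mul_neg, neg_neg]
  · refine rank_eq_card_width_of_mul_eq_one (X := -(fromRows A 0)ᵀ) ?_ |>.trans (Fintype.card_fin k)
    rw [Matrix.neg_mul, Matrix.mul_neg, neg_neg, ← transpose_mul,
      fromCols_inv_mul_fromRows_eq_one _ hA, transpose_one]
end
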